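/- Let X and Y be finite, nonempty, disjoint subsets of ℝ^D, let p > 1, set δ = min{κ(Y), d_E(X,Y)}, and let 0 < ε < δ^p. Then for every pair of distinct points u, v ∈ X ∪ Y: d_{X∪Y,p}(u,v) ≤ ε if and only if u ∈ X, v ∈ X, and d_{X,p}(u,v) ≤ ε. Consequently, for every scale ε < δ^p, a finite subset σ ⊆ X ∪ Y with at least two elements has all pairwise d_{X∪Y,p}-distances at most ε if and only if σ ⊆ X and all pairwise d_{X,p}-distances in σ are at most ε (i.e., the Vietoris–Rips complex of (X∪Y, d_{X∪Y,p}) at scale ε equals that of (X, d_{X,p}) together with the points of Y as isolated vertices). -/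

import Mathlib

/-- The cost of a polygonal path given by the list `l` of its vertices:
the sum over consecutive pairs of the `p`-th power of the Euclidean distance. -/
noncomputable def chainCost {D : ℕ} (p : ℝ) (l : List (EuclideanSpace ℝ (Fin D))) : ℝ :=
  ((l.zip l.tail).map (fun q => dist q.1 q.2 ^ p)).sum

/-- The sample Fermat distance: `d_{S,p}(x,y)` is the infimum over all finite paths
`x = x₀, x₁, …, x_{r+1} = y` with interior points `x₁,…,x_r ∈ S` of
`Σ_{i=0}^{r} |x_{i+1} − x_i|^p`. -/
noncomputable def fermatDist {D : ℕ} (p : ℝ) (S : Finset (EuclideanSpace ℝ (Fin D)))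
    (x y : EuclideanSpace ℝ (Fin D)) : ℝ :=
  sInf {c : ℝ | ∃ l : List (EuclideanSpace ℝ (Fin D)),
    (∀ z ∈ l, z ∈ S) ∧ c = chainCost p (x :: (l ++ [y]))}

/-- The Euclidean distance `d_E(A,B) = min_{a ∈ A, b ∈ B} |a − b|` between finite sets. -/
noncomputable def setDistE {D : ℕ} (A B : Finset (EuclideanSpace ℝ (Fin D))) : ℝ :=
  sInf {d : ℝ | ∃ a ∈ A, ∃ b ∈ B, d = dist a b}

/-- The minimal spacing `κ(B) = min_{b ∈ B} d_E({b}, B∖{b})` of a finite set. -/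
noncomputable def minSpacing {D : ℕ} (B : Finset (EuclideanSpace ℝ (Fin D))) : ℝ :=
  sInf {d : ℝ | ∃ b ∈ B, ∃ b' ∈ B, b ≠ b' ∧ d = dist b b'}
noncomputable instance {D : ℕ} : DecidableEq (EuclideanSpace ℝ (Fin D)) := Classical.decEq _

/-!
Every point of `Y` is at distance at least `δ` from all other points of `X ∪ Y`, so a path
between distinct points that visits `Y` (at an endpoint or inside) makes a step of cost at
least `δ^p > ε`. Hence a path of cost below `δ^p` joins two points of `X` through `X` only,
and the Fermat distances in `X ∪ Y` and in `X` agree below that threshold.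
-/

theorem forall_pairs_iff_subset_and_forall_pairs {α : Type*} {T X σ : Finset α}
    {r r' : α → α → Prop} (hσ : σ ⊆ T) (hcard : 2 ≤ σ.card)
    (hpair : ∀ u ∈ T, ∀ v ∈ T, u ≠ v → r u v → u ∈ X ∧ r' u v)
    (hrefl : ∀ u, r' u u) (hmono : ∀ u v, r' u v → r u v) :
    (∀ u ∈ σ, ∀ v ∈ σ, r u v) ↔ σ ⊆ X ∧ ∀ u ∈ σ, ∀ v ∈ σ, r' u v := by
  constructor
  · intro h
    refine ⟨fun u hu => ?_, fun u hu v hv => ?_⟩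
    · obtain ⟨v, hv, hvu⟩ := Finset.exists_mem_ne hcard u
      exact (hpair u (hσ hu) v (hσ hv) hvu.symm (h u hu v hv)).1
    · rcases eq_or_ne u v with rfl | huv
      · exact hrefl u
      · exact (hpair u (hσ hu) v (hσ hv) huv (h u hu v hv)).2
  · rintro ⟨-, h⟩ u hu v hv
    exact hmono u v (h u hu v hv)

section Fermat

variable {D : ℕ} {p c : ℝ} {S Y : Finset (EuclideanSpace ℝ (Fin D))}
  {u v x y : EuclideanSpace ℝ (Fin D)}

theorem chainCost_nonneg (l : List (EuclideanSpace ℝ (Fin D))) : 0 ≤ chainCost p l :=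
  List.sum_nonneg <| by
    simp only [List.mem_map]
    rintro _ ⟨q, -, rfl⟩
    exact Real.rpow_nonneg dist_nonneg p

theorem chainCost_cons_cons (a b : EuclideanSpace ℝ (Fin D))
    (l : List (EuclideanSpace ℝ (Fin D))) :
    chainCost p (a :: b :: l) = dist a b ^ p + chainCost p (b :: l) := by
  simp [chainCost]

theorem isChain_of_chainCost_lt : ∀ {l : List (EuclideanSpace ℝ (Fin D))},
    chainCost p l < c → l.IsChain (fun a b => dist a b ^ p < c)
  | [], _ => .nil
  | [_], _ => .singleton _
  | a :: b :: l, h => by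
    rw [chainCost_cons_cons] at h
    have hstep : 0 ≤ dist a b ^ p := Real.rpow_nonneg dist_nonneg p
    have hrest : 0 ≤ chainCost p (b :: l) := chainCost_nonneg _
    exact List.isChain_cons_cons.2 ⟨by linarith, isChain_of_chainCost_lt (by linarith)⟩

theorem notMem_of_chainCost_lt (hsep : ∀ a ∈ S, ∀ b ∈ Y, a ≠ b → c ≤ dist a b ^ p)
    (hu : u ∈ S) (hv : v ∈ S) (huv : u ≠ v) {l : List (EuclideanSpace ℝ (Fin D))}
    (hl : ∀ z ∈ l, z ∈ S) (hcost : chainCost p (u :: (l ++ [v])) < c) :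
    ∀ z ∈ u :: (l ++ [v]), z ∉ Y := by
  have hS : ∀ z ∈ u :: (l ++ [v]), z ∈ S :=
    List.forall_mem_cons.2 ⟨hu, List.forall_mem_append.2 ⟨hl, by simpa using hv⟩⟩
  -- a cheap step either stays put or avoids `Y`; as this relation is transitive, it relates `u`
  -- to every later point of the path
  let R : EuclideanSpace ℝ (Fin D) → EuclideanSpace ℝ (Fin D) → Prop :=
    fun a b => a = b ∨ (a ∉ Y ∧ b ∉ Y)
  have hchain : (u :: (l ++ [v])).IsChain R := by
    refine (isChain_of_chainCost_lt hcost).imp_of_mem_imp fun a b ha hb hab => ?_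
    rcases eq_or_ne a b with hab' | hab'
    · exact .inl hab'
    refine .inr ⟨fun haY => ?_, fun hbY => ?_⟩
    · have := hsep b (hS b hb) a haY hab'.symm
      rw [dist_comm] at this
      linarith
    · linarith [hsep a (hS a ha) b hbY hab']
  have htrans : Trans R R R := ⟨fun hab hbc => by grind⟩
  have hfrom_u := List.pairwise_cons.1 hchain.pairwise |>.1
  have huY : u ∉ Y := by
    rcases hfrom_u v (by simp) with h | h
    exacts [absurd h huv, h.1]
  simp only [List.mem_cons]
  rintro z (rfl | hz)
  · exact huY
  · rcases hfrom_u z hz with rfl | h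
    exacts [huY, h.2]

theorem fermatDist_le_chainCost {l : List (EuclideanSpace ℝ (Fin D))}
    (hl : ∀ z ∈ l, z ∈ S) :
    fermatDist p S x y ≤ chainCost p (x :: (l ++ [y])) :=
  csInf_le ⟨0, by rintro _ ⟨_, -, rfl⟩; exact chainCost_nonneg _⟩ ⟨l, hl, rfl⟩

theorem exists_chainCost_lt_of_fermatDist_lt (h : fermatDist p S x y < c) :
    ∃ l : List (EuclideanSpace ℝ (Fin D)),
      (∀ z ∈ l, z ∈ S) ∧ chainCost p (x :: (l ++ [y])) < c := by
  obtain ⟨_, ⟨l, hl, rfl⟩, hlt⟩ :=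
    exists_lt_of_csInf_lt (by exact ⟨_, [], fun _ hz => absurd hz List.not_mem_nil, rfl⟩) h
  exact ⟨l, hl, hlt⟩

theorem fermatDist_anti {T : Finset (EuclideanSpace ℝ (Fin D))} (hST : S ⊆ T) :
    fermatDist p T x y ≤ fermatDist p S x y :=
  le_csInf ⟨_, [], fun _ hz => absurd hz List.not_mem_nil, rfl⟩ <| by
    rintro _ ⟨l, hl, rfl⟩
    exact fermatDist_le_chainCost fun z hz => hST (hl z hz)

theorem fermatDist_self_nonpos (hp : p ≠ 0) : fermatDist p S x x ≤ 0 := by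
  simpa [chainCost, Real.zero_rpow hp] using
    fermatDist_le_chainCost (p := p) (S := S) (x := x) (y := x) (l := []) (by simp)

theorem fermatDist_sdiff_le_of_fermatDist_lt
    (hsep : ∀ a ∈ S, ∀ b ∈ Y, a ≠ b → c ≤ dist a b ^ p)
    (hu : u ∈ S) (hv : v ∈ S) (huv : u ≠ v) (h : fermatDist p S u v < c) :
    u ∉ Y ∧ v ∉ Y ∧ fermatDist p (S \ Y) u v ≤ fermatDist p S u v := by
  have avoid : ∀ {l}, (∀ z ∈ l, z ∈ S) → chainCost p (u :: (l ++ [v])) < c →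
      ∀ z ∈ u :: (l ++ [v]), z ∉ Y :=
    notMem_of_chainCost_lt hsep hu hv huv
  obtain ⟨l, hl, hcost⟩ := exists_chainCost_lt_of_fermatDist_lt h
  refine ⟨avoid hl hcost u (by simp), avoid hl hcost v (by simp), ?_⟩
  refine le_of_forall_gt_imp_ge_of_dense fun a ha => ?_
  obtain ⟨l', hl', hcost'⟩ := exists_chainCost_lt_of_fermatDist_lt (lt_min ha h)
  have hl'Y : ∀ z ∈ l', z ∈ S \ Y := fun z hz => Finset.mem_sdiff.2
    ⟨hl' z hz, avoid hl' (hcost'.trans_le (min_le_right _ _)) z (by simp [hz])⟩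
  exact (fermatDist_le_chainCost hl'Y).trans (hcost'.le.trans (min_le_left _ _))

end Fermat

section Separation

variable {D : ℕ} {X Y : Finset (EuclideanSpace ℝ (Fin D))}

theorem minSpacing_nonneg : 0 ≤ minSpacing Y :=
  Real.sInf_nonneg <| by rintro _ ⟨_, -, _, -, -, rfl⟩; exact dist_nonneg

theorem setDistE_nonneg : 0 ≤ setDistE X Y :=
  Real.sInf_nonneg <| by rintro _ ⟨_, -, _, -, rfl⟩; exact dist_nonneg

theorem min_minSpacing_setDistE_le_dist {a b : EuclideanSpace ℝ (Fin D)} (ha : a ∈ X ∪ Y)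
    (hb : b ∈ Y) (hab : a ≠ b) : min (minSpacing Y) (setDistE X Y) ≤ dist a b := by
  rcases Finset.mem_union.1 ha with haX | haY
  · refine (min_le_right _ _).trans (csInf_le ⟨0, ?_⟩ ⟨a, haX, b, hb, rfl⟩)
    rintro _ ⟨_, -, _, -, rfl⟩; exact dist_nonneg
  · refine (min_le_left _ _).trans (csInf_le ⟨0, ?_⟩ ⟨a, haY, b, hb, hab, rfl⟩)
    rintro _ ⟨_, -, _, -, -, rfl⟩; exact dist_nonneg

end Separation

theorem fermatDist_rips_eq_general {D : ℕ} (p : ℝ) (hp : 1 < p)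
    (X Y : Finset (EuclideanSpace ℝ (Fin D)))
    (hdisj : Disjoint X Y)
    (ε : ℝ) (hε₀ : 0 < ε) (hε : ε < min (minSpacing Y) (setDistE X Y) ^ p) :
    (∀ u ∈ X ∪ Y, ∀ v ∈ X ∪ Y, u ≠ v →
      (fermatDist p (X ∪ Y) u v ≤ ε ↔ u ∈ X ∧ v ∈ X ∧ fermatDist p X u v ≤ ε)) ∧
    (∀ σ : Finset (EuclideanSpace ℝ (Fin D)), σ ⊆ X ∪ Y → 2 ≤ σ.card →
      ((∀ u ∈ σ, ∀ v ∈ σ, fermatDist p (X ∪ Y) u v ≤ ε) ↔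
        (σ ⊆ X ∧ ∀ u ∈ σ, ∀ v ∈ σ, fermatDist p X u v ≤ ε))) := by
  have hsep : ∀ a ∈ X ∪ Y, ∀ b ∈ Y, a ≠ b →
      min (minSpacing Y) (setDistE X Y) ^ p ≤ dist a b ^ p :=
    fun a ha b hb hab => Real.rpow_le_rpow (le_min minSpacing_nonneg setDistE_nonneg)
      (min_minSpacing_setDistE_le_dist ha hb hab) (by linarith)
  have hmono : ∀ u v, fermatDist p X u v ≤ ε → fermatDist p (X ∪ Y) u v ≤ ε :=
    fun u v h => (fermatDist_anti Finset.subset_union_left).trans h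
  have hpair : ∀ u ∈ X ∪ Y, ∀ v ∈ X ∪ Y, u ≠ v → fermatDist p (X ∪ Y) u v ≤ ε →
      u ∈ X ∧ v ∈ X ∧ fermatDist p X u v ≤ ε := by
    intro u hu v hv huv h
    obtain ⟨huY, hvY, hle⟩ :=
      fermatDist_sdiff_le_of_fermatDist_lt hsep hu hv huv (h.trans_lt hε)
    rw [Finset.union_sdiff_cancel_right hdisj] at hle
    exact ⟨(Finset.mem_union.1 hu).resolve_right huY,
      (Finset.mem_union.1 hv).resolve_right hvY, hle.trans h⟩
  refine ⟨fun u hu v hv huv => ⟨hpair u hu v hv huv, fun h => hmono u v h.2.2⟩,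
    fun σ hσ hcard => forall_pairs_iff_subset_and_forall_pairs hσ hcard
      (fun u hu v hv huv h => (hpair u hu v hv huv h).imp_right And.right)
      (fun u => (fermatDist_self_nonpos (by linarith)).trans hε₀.le) hmono⟩

/-- for `0 < ε < δ^p` with `δ = min{κ(Y), d_E(X,Y)}`, two distinct points
of `X ∪ Y` are at sample Fermat distance at most `ε` iff both lie in `X` and their
sample Fermat distance in `X` is at most `ε`; consequently, at scale `ε` the
Vietoris–Rips complex of `(X ∪ Y, d_{X∪Y,p})` equals that of `(X, d_{X,p})` together
with the points of `Y` as isolated vertices. -/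
theorem fermatDist_rips_eq {D : ℕ} (p : ℝ) (hp : 1 < p)
    (X Y : Finset (EuclideanSpace ℝ (Fin D)))
    (hX : X.Nonempty) (hY : Y.Nonempty) (hdisj : Disjoint X Y)
    (ε : ℝ) (hε₀ : 0 < ε) (hε : ε < min (minSpacing Y) (setDistE X Y) ^ p) :
    (∀ u ∈ X ∪ Y, ∀ v ∈ X ∪ Y, u ≠ v →
      (fermatDist p (X ∪ Y) u v ≤ ε ↔ u ∈ X ∧ v ∈ X ∧ fermatDist p X u v ≤ ε)) ∧
    (∀ σ : Finset (EuclideanSpace ℝ (Fin D)), σ ⊆ X ∪ Y → 2 ≤ σ.card →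
      ((∀ u ∈ σ, ∀ v ∈ σ, fermatDist p (X ∪ Y) u v ≤ ε) ↔
        (σ ⊆ X ∧ ∀ u ∈ σ, ∀ v ∈ σ, fermatDist p X u v ≤ ε))) :=
  fermatDist_rips_eq_general p hp X Y hdisj ε hε₀ hε
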